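/- Let W₀, W₁ be pmfs on finite Z with W₁ ≪ W₀, and set W_α = αW₁ + (1−α)W₀. Then the map α ↦ D(W_α ‖ W₀) is continuous on [0,1], equals 0 at α = 0, and satisfies D(W_α‖W₀)/α² → χ₂(W₁‖W₀)/2 as α → 0⁺. -/

import Mathlib

/-!
With `c z = (W1 z - W0 z) / W0 z` and `φ x = (1 + x) log (1 + x) - x` (`bregmanMulLog`),
absolute continuity and equal total masses make the linear terms cancel, so
`D(W_α‖W0) = ∑ z, W0 z * φ (α * c z)`. Now `φ` is continuous, `φ 0 = 0`, and `φ x / x² → 1/2`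
by L'Hôpital (`φ' x = log (1 + x)`), so each summand divided by `α²` tends to
`W0 z * c z ^ 2 / 2`, which is half the `χ²` summand.
-/

open Filter Real

noncomputable def KL {Z : Type*} [Fintype Z] (P Q : Z → ℝ) : ℝ :=
  ∑ z, P z * Real.log (P z / Q z)

noncomputable def chi2 {Z : Type*} [Fintype Z] (P Q : Z → ℝ) : ℝ :=
  ∑ z, (P z - Q z)^2 / Q z

def IsPMF {Z : Type*} [Fintype Z] (P : Z → ℝ) : Prop :=
  (∀ z, 0 ≤ P z) ∧ ∑ z, P z = 1

/-- absolute continuity `P ≪ Q` for pmfs on a finite alphabet -/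
def AC {Z : Type*} [Fintype Z] (P Q : Z → ℝ) : Prop := ∀ z, Q z = 0 → P z = 0

open Topology

/-- The Bregman divergence of `t ↦ t log t` between `1 + x` and `1`. -/
noncomputable def bregmanMulLog (x : ℝ) : ℝ := (1 + x) * log (1 + x) - x

@[simp] lemma bregmanMulLog_zero : bregmanMulLog 0 = 0 := by simp [bregmanMulLog]

@[fun_prop] lemma continuous_bregmanMulLog : Continuous bregmanMulLog :=
  (continuous_const.add continuous_id).mul_log.sub continuous_id

lemma hasDerivAt_bregmanMulLog {x : ℝ} (hx : 1 + x ≠ 0) :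
    HasDerivAt bregmanMulLog (log (1 + x)) x := by
  rw [show log (1 + x) = (log (1 + x) + 1) * 1 - 1 by ring]
  exact ((hasDerivAt_mul_log hx).comp x ((hasDerivAt_id x).const_add 1)).sub (hasDerivAt_id x)

lemma tendsto_log_one_add_div_self : Tendsto (fun x => log (1 + x) / x) (𝓝[≠] 0) (𝓝 1) := by
  have h : HasDerivAt (fun x => log (1 + x)) 1 0 := by
    simpa using ((hasDerivAt_id (0 : ℝ)).const_add 1).log (by norm_num)
  simpa [div_eq_inv_mul] using h.tendsto_slope_zero

lemma tendsto_bregmanMulLog_div_sq :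
    Tendsto (fun x => bregmanMulLog x / x ^ 2) (𝓝[≠] 0) (𝓝 (1 / 2)) := by
  have hne : ∀ᶠ x in 𝓝[≠] (0 : ℝ), 1 + x ≠ 0 :=
    nhdsWithin_le_nhds <| (continuous_const.add continuous_id).continuousAt.eventually_ne
      (by norm_num : (1 : ℝ) + 0 ≠ 0)
  refine HasDerivAt.lhopital_zero_nhdsNE (f' := fun x => log (1 + x)) (g' := fun x => 2 * x)
    (hne.mono fun x hx => hasDerivAt_bregmanMulLog hx)
    (.of_forall fun x => by simpa using hasDerivAt_pow 2 x)
    (eventually_mem_nhdsWithin.mono fun x hx => mul_ne_zero two_ne_zero hx) ?_ ?_ ?_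
  · simpa using continuous_bregmanMulLog.tendsto 0 |>.mono_left nhdsWithin_le_nhds
  · simpa using (continuous_pow 2).tendsto (0 : ℝ) |>.mono_left nhdsWithin_le_nhds
  · convert tendsto_log_one_add_div_self.const_mul (1 / 2) using 2 <;> ring

lemma tendsto_bregmanMulLog_mul_div_sq (c : ℝ) :
    Tendsto (fun α => bregmanMulLog (α * c) / α ^ 2) (𝓝[≠] 0) (𝓝 (c ^ 2 / 2)) := by
  rcases eq_or_ne c 0 with rfl | hc
  · simp
  have hmul : Tendsto (fun α : ℝ => α * c) (𝓝[≠] 0) (𝓝[≠] 0) :=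
    tendsto_nhdsWithin_of_tendsto_nhds_of_eventually_within _
      (by simpa using (continuous_mul_const c).tendsto (0 : ℝ) |>.mono_left nhdsWithin_le_nhds)
      (eventually_mem_nhdsWithin.mono fun α hα => mul_ne_zero hα hc)
  rw [show c ^ 2 / 2 = c ^ 2 * (1 / 2) by ring]
  refine ((tendsto_bregmanMulLog_div_sq.comp hmul).const_mul (c ^ 2)).congr' ?_
  filter_upwards [eventually_mem_nhdsWithin] with α hα
  simp only [Function.comp_apply]
  field_simp [show α ≠ 0 from hα]

lemma mixture_mul_log_div_eq {p q : ℝ} (hpq : q = 0 → p = 0) (α : ℝ) :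
    (α * p + (1 - α) * q) * log ((α * p + (1 - α) * q) / q)
      = q * bregmanMulLog (α * ((p - q) / q)) + α * (p - q) := by
  rcases eq_or_ne q 0 with rfl | hq
  · simp [hpq rfl]
  have hratio : (α * p + (1 - α) * q) / q = 1 + α * ((p - q) / q) := by
    field_simp
    ring
  rw [bregmanMulLog, ← hratio]
  field_simp
  ring

theorem KL_mixture_eq_sum_bregmanMulLog {Z : Type*} [Fintype Z] {W0 W1 : Z → ℝ}
    (hAC : AC W1 W0) (hsum : ∑ z, W1 z = ∑ z, W0 z) (α : ℝ) :
    KL (fun z => α * W1 z + (1 - α) * W0 z) W0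
      = ∑ z, W0 z * bregmanMulLog (α * ((W1 z - W0 z) / W0 z)) := by
  have hlin : ∑ z, α * (W1 z - W0 z) = 0 := by
    rw [← Finset.mul_sum, Finset.sum_sub_distrib, hsum, sub_self, mul_zero]
  simp only [KL, mixture_mul_log_div_eq (hAC _), Finset.sum_add_distrib, hlin, add_zero]

lemma chi2_eq_sum_mul_sq {Z : Type*} [Fintype Z] (P Q : Z → ℝ) :
    chi2 P Q = ∑ z, Q z * ((P z - Q z) / Q z) ^ 2 := by
  refine Finset.sum_congr rfl fun z _ => ?_
  rcases eq_or_ne (Q z) 0 with hq | hq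
  · simp [hq]
  · field_simp

/-- `α ↦ D(αW₁+(1−α)W₀ ‖ W₀)` is continuous on `[0,1]`, vanishes
at `α = 0`, and `D(W_α‖W₀)/α² → χ₂(W₁‖W₀)/2` as `α → 0⁺`. -/
theorem stmt16 {Z : Type*} [Fintype Z] (W0 W1 : Z → ℝ)
    (hW0 : IsPMF W0) (hW1 : IsPMF W1) (hAC : AC W1 W0) :
    ContinuousOn (fun α : ℝ => KL (fun z => α * W1 z + (1 - α) * W0 z) W0)
        (Set.Icc 0 1) ∧
    KL (fun z => (0:ℝ) * W1 z + (1 - 0) * W0 z) W0 = 0 ∧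
    Tendsto (fun α : ℝ => KL (fun z => α * W1 z + (1 - α) * W0 z) W0 / α ^ 2)
      (nhdsWithin 0 (Set.Ioi 0)) (nhds (chi2 W1 W0 / 2)) := by
  simp only [KL_mixture_eq_sum_bregmanMulLog hAC (hW1.2.trans hW0.2.symm)]
  refine ⟨Continuous.continuousOn (by fun_prop), by simp, ?_⟩
  simp only [chi2_eq_sum_mul_sq, Finset.sum_div, mul_div_assoc]
  refine tendsto_finsetSum _ fun z _ =>
    ((tendsto_bregmanMulLog_mul_div_sq _).const_mul _).mono_left ?_
  exact nhdsWithin_mono _ fun α hα => ne_of_gt hα
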